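/- Let G be a connected, locally finite simple Ricci-flat graph with girth g(G) = 5. Then G has no vertex of degree 4. -/

import Mathlib

open Filter Topology Classical

noncomputable section

namespace RicciFlatPaper

variable {V : Type*}

/-- Degree as the natural cardinality of the neighbor set. -/
def deg (G : SimpleGraph V) (x : V) : ℕ := (G.neighborSet x).ncard

/-- The probability measure `m_x^α`: mass `α` at `x`, mass `(1-α)/d_x` at each
neighbor of `x`, and `0` elsewhere. -/
def mass (G : SimpleGraph V) (α : ℝ) (x : V) : V → ℝ :=
  fun v => if v = x then α else if G.Adj x v then (1 - α) / (deg G x) else 0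

/-- `A` is a (finitely supported, nonnegative) coupling between `m₁` and `m₂`. -/
def IsCoupling (m₁ m₂ : V → ℝ) (A : V → V → ℝ) : Prop :=
  (∀ u v, 0 ≤ A u v) ∧
  (Function.support (fun p : V × V => A p.1 p.2)).Finite ∧
  (∀ u, ∑ᶠ v, A u v = m₁ u) ∧ (∀ v, ∑ᶠ u, A u v = m₂ v)

/-- The transportation (Wasserstein) distance between two distributions,
with respect to the graph distance of `G`. -/
def W (G : SimpleGraph V) (m₁ m₂ : V → ℝ) : ℝ :=
  sInf {c | ∃ A : V → V → ℝ, IsCoupling m₁ m₂ A ∧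
    c = ∑ᶠ p : V × V, A p.1 p.2 * (G.dist p.1 p.2 : ℝ)}

/-- `κ_α(x,y) = 1 - W(m_x^α, m_y^α)`. -/
def kappaAlpha (G : SimpleGraph V) (α : ℝ) (x y : V) : ℝ :=
  1 - W G (mass G α x) (mass G α y)

/-- Lin–Lu–Yau Ricci curvature `κ(x,y) = lim_{α→1} κ_α(x,y)/(1-α)`. -/
def ricci (G : SimpleGraph V) (x y : V) : ℝ :=
  limUnder (𝓝[<] (1 : ℝ)) (fun α => kappaAlpha G α x y / (1 - α))

/-- A graph is Ricci-flat if the Ricci curvature vanishes on every edge. -/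
def RicciFlat (G : SimpleGraph V) : Prop := ∀ x y : V, G.Adj x y → ricci G x y = 0

/-- The edge `xy` lies on a cycle of length `n`. -/
def EdgeInCycleOfLength (G : SimpleGraph V) (x y : V) (n : ℕ) : Prop :=
  ∃ (v : V) (c : G.Walk v v), c.IsCycle ∧ c.length = n ∧ s(x, y) ∈ c.edges

section Lemmas

open Function Set SimpleGraph

variable {G : SimpleGraph V} [G.LocallyFinite]

/-- cost of a transport plan -/
def cost (G : SimpleGraph V) (A : V → V → ℝ) : ℝ :=
  ∑ᶠ p : V × V, A p.1 p.2 * (G.dist p.1 p.2 : ℝ)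

lemma W_eq (m₁ m₂ : V → ℝ) :
    W G m₁ m₂ = sInf {c | ∃ A : V → V → ℝ, IsCoupling m₁ m₂ A ∧ c = cost G A} := rfl

lemma deg_eq (x : V) : deg G x = (G.neighborFinset x).card := by
  rw [deg, neighborFinset_def, Set.ncard_eq_toFinset_card']

lemma deg_pos {x y : V} (h : G.Adj x y) : 0 < deg G x := by
  rw [deg_eq]
  exact Finset.card_pos.2 ⟨y, (mem_neighborFinset G x y).2 h⟩

lemma mass_support (α : ℝ) (x : V) :
    Function.support (mass G α x) ⊆ (insert x (G.neighborFinset x) : Finset V) := by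
  intro v hv
  simp only [Function.mem_support, mass] at hv
  by_cases h1 : v = x
  · simp [h1]
  · by_cases h2 : G.Adj x v
    · simp [mem_neighborFinset, h2]
    · simp [h1, h2] at hv

lemma mass_support_finite (α : ℝ) (x : V) : (Function.support (mass G α x)).Finite :=
  Set.Finite.subset (Finset.finite_toSet _) (mass_support α x)

lemma finsum_mass_mul (α : ℝ) (x : V) (f : V → ℝ) :
    ∑ᶠ v, f v * mass G α x v
      = α * f x + ((1 - α) / (deg G x : ℝ)) * ∑ u ∈ G.neighborFinset x, f u := by
  have hsub : Function.support (fun v => f v * mass G α x v)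
      ⊆ (insert x (G.neighborFinset x) : Finset V) := by
    intro v hv
    apply mass_support α x
    intro h0
    simp [mem_support, h0] at hv
  rw [finsum_eq_sum_of_support_subset _ hsub,
    Finset.sum_insert (G.notMem_neighborFinset_self x)]
  have h1 : f x * mass G α x x = α * f x := by simp [mass]; ring
  have h2 : ∀ u ∈ G.neighborFinset x,
      f u * mass G α x u = ((1 - α) / (deg G x : ℝ)) * f u := by
    intro u hu
    rw [mem_neighborFinset] at hu
    have : u ≠ x := fun h => G.irrefl (h ▸ hu)
    simp [mass, this, hu]; ring
  rw [h1, Finset.sum_congr rfl h2, ← Finset.mul_sum]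

lemma finsum_mass (α : ℝ) {x : V} (hx : 0 < deg G x) : ∑ᶠ v, mass G α x v = 1 := by
  have := finsum_mass_mul (G := G) α x (fun _ => 1)
  simp only [one_mul, mul_one] at this
  rw [show (fun v => mass G α x v) = mass G α x from rfl] at this
  rw [this, Finset.sum_const, ← deg_eq, nsmul_eq_mul, mul_one]
  have hd : (deg G x : ℝ) ≠ 0 := by positivity
  field_simp
  ring

lemma mass_nonneg {α : ℝ} (h0 : 0 ≤ α) (h1 : α ≤ 1) (x v : V) : 0 ≤ mass G α x v := by
  unfold mass
  split_ifs
  · exact h0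
  · exact div_nonneg (by linarith) (Nat.cast_nonneg _)
  · exact le_rfl

lemma cost_nonneg {A : V → V → ℝ} (h : ∀ u v, 0 ≤ A u v) : 0 ≤ cost G A :=
  finsum_nonneg fun p => mul_nonneg (h _ _) (Nat.cast_nonneg _)

lemma W_bddBelow (m₁ m₂ : V → ℝ) :
    BddBelow {c | ∃ A : V → V → ℝ, IsCoupling m₁ m₂ A ∧ c = cost G A} :=
  ⟨0, by rintro c ⟨A, hA, rfl⟩; exact cost_nonneg hA.1⟩

lemma W_le {m₁ m₂ : V → ℝ} {A : V → V → ℝ} (hA : IsCoupling m₁ m₂ A) :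
    W G m₁ m₂ ≤ cost G A :=
  csInf_le (W_bddBelow m₁ m₂) ⟨A, hA, rfl⟩

lemma cost_ge {m₁ m₂ : V → ℝ} {A : V → V → ℝ} (hA : IsCoupling m₁ m₂ A)
    (f : V → ℝ) (hf : ∀ u v, f u - f v ≤ (G.dist u v : ℝ)) :
    (∑ᶠ u, f u * m₁ u) - (∑ᶠ u, f u * m₂ u) ≤ cost G A := by
  obtain ⟨hpos, hfin, hrow, hcol⟩ := hA
  classical
  set T : Finset (V × V) := hfin.toFinset with hT
  set s : Finset V := T.image Prod.fst ∪ T.image Prod.snd with hs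
  have hmemT : ∀ u v : V, A u v ≠ 0 → (u, v) ∈ T := by
    intro u v h
    simp [hT, Set.Finite.mem_toFinset, mem_support, h]
  have hfst : ∀ u v : V, A u v ≠ 0 → u ∈ s := by
    intro u v h
    exact Finset.mem_union_left _ (Finset.mem_image.2 ⟨(u,v), hmemT u v h, rfl⟩)
  have hsnd : ∀ u v : V, A u v ≠ 0 → v ∈ s := by
    intro u v h
    exact Finset.mem_union_right _ (Finset.mem_image.2 ⟨(u,v), hmemT u v h, rfl⟩)
  -- row sums over s
  have hrow' : ∀ u, m₁ u = ∑ v ∈ s, A u v := by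
    intro u
    rw [← hrow u]
    apply finsum_eq_sum_of_support_subset
    intro v hv
    exact hsnd u v (by simpa [Function.mem_support] using hv)
  have hcol' : ∀ v, m₂ v = ∑ u ∈ s, A u v := by
    intro v
    rw [← hcol v]
    apply finsum_eq_sum_of_support_subset
    intro u hu
    exact hfst u v (by simpa [Function.mem_support] using hu)
  have hm₁ : Function.support (fun u => f u * m₁ u) ⊆ (s : Set V) := by
    intro u hu
    simp only [Function.mem_support] at hu
    have h1 : m₁ u ≠ 0 := right_ne_zero_of_mul hu
    rw [← hrow u] at h1
    obtain ⟨v, hv⟩ : ∃ v, A u v ≠ 0 := by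
      by_contra hno
      push_neg at hno
      exact h1 (by simp [hno])
    exact hfst u v hv
  have hm₂ : Function.support (fun v => f v * m₂ v) ⊆ (s : Set V) := by
    intro v hv
    simp only [Function.mem_support] at hv
    have h1 : m₂ v ≠ 0 := right_ne_zero_of_mul hv
    rw [← hcol v] at h1
    obtain ⟨u, hu⟩ : ∃ u, A u v ≠ 0 := by
      by_contra hno
      push_neg at hno
      exact h1 (by simp [hno])
    exact hsnd u v hu
  have hcost : Function.support (fun p : V × V => A p.1 p.2 * (G.dist p.1 p.2 : ℝ))
      ⊆ ((s ×ˢ s : Finset (V × V)) : Set (V × V)) := by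
    rintro ⟨u, v⟩ h
    simp only [Function.mem_support] at h
    have hA0 : A u v ≠ 0 := fun h0 => h (by simp [h0])
    simp only [Finset.coe_product, Set.mem_prod]
    exact ⟨hfst u v hA0, hsnd u v hA0⟩
  rw [cost, finsum_eq_sum_of_support_subset _ hcost,
    finsum_eq_sum_of_support_subset _ hm₁, finsum_eq_sum_of_support_subset _ hm₂]
  rw [Finset.sum_product' (f := fun u v => A u v * (G.dist u v : ℝ))]
  have e1 : ∑ u ∈ s, f u * m₁ u = ∑ u ∈ s, ∑ v ∈ s, f u * A u v :=
    Finset.sum_congr rfl fun u _ => by rw [hrow' u, Finset.mul_sum]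
  have e2 : ∑ v ∈ s, f v * m₂ v = ∑ u ∈ s, ∑ v ∈ s, f v * A u v := by
    rw [Finset.sum_comm]
    exact Finset.sum_congr rfl fun v _ => by rw [hcol' v, Finset.mul_sum]
  have lhs_eq : (∑ u ∈ s, f u * m₁ u) - (∑ v ∈ s, f v * m₂ v)
      = ∑ u ∈ s, ∑ v ∈ s, (f u - f v) * A u v := by
    rw [e1, e2, ← Finset.sum_sub_distrib]
    refine Finset.sum_congr rfl fun u _ => ?_
    rw [← Finset.sum_sub_distrib]
    exact Finset.sum_congr rfl fun v _ => by ring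
  rw [lhs_eq]
  apply Finset.sum_le_sum
  intro u _
  apply Finset.sum_le_sum
  intro v _
  calc (f u - f v) * A u v ≤ (G.dist u v : ℝ) * A u v :=
        mul_le_mul_of_nonneg_right (hf u v) (hpos u v)
    _ = A u v * (G.dist u v : ℝ) := mul_comm _ _

lemma le_W {m₁ m₂ : V → ℝ} (hne : ∃ A : V → V → ℝ, IsCoupling m₁ m₂ A)
    (f : V → ℝ) (hf : ∀ u v, f u - f v ≤ (G.dist u v : ℝ)) :
    (∑ᶠ u, f u * m₁ u) - (∑ᶠ u, f u * m₂ u) ≤ W G m₁ m₂ := by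
  obtain ⟨A₀, hA₀⟩ := hne
  rw [W_eq]
  refine le_csInf ⟨cost G A₀, ⟨A₀, hA₀, rfl⟩⟩ ?_
  rintro c ⟨A, hA, rfl⟩
  exact cost_ge hA f hf
lemma row_support_finite {A : V → V → ℝ}
    (hfin : (Function.support fun p : V × V => A p.1 p.2).Finite) (u : V) :
    (Function.support (A u)).Finite := by
  apply (hfin.image Prod.snd).subset
  intro v hv
  exact ⟨(u, v), by simpa [Function.mem_support] using hv, rfl⟩

lemma col_support_finite {A : V → V → ℝ}
    (hfin : (Function.support fun p : V × V => A p.1 p.2).Finite) (v : V) :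
    (Function.support (fun u => A u v)).Finite := by
  apply (hfin.image Prod.fst).subset
  intro u hu
  exact ⟨(u, v), by simpa [Function.mem_support] using hu, rfl⟩

lemma isCoupling_prod {m₁ m₂ : V → ℝ} (h₁ : ∀ v, 0 ≤ m₁ v) (h₂ : ∀ v, 0 ≤ m₂ v)
    (hs₁ : (Function.support m₁).Finite) (hs₂ : (Function.support m₂).Finite)
    (ht₁ : ∑ᶠ v, m₁ v = 1) (ht₂ : ∑ᶠ v, m₂ v = 1) :
    IsCoupling m₁ m₂ (fun u v => m₁ u * m₂ v) := by
  refine ⟨fun u v => mul_nonneg (h₁ u) (h₂ v), ?_, fun u => ?_, fun v => ?_⟩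
  · apply (hs₁.prod hs₂).subset
    rintro ⟨u, v⟩ h
    simp only [Function.mem_support] at h
    exact ⟨left_ne_zero_of_mul h, right_ne_zero_of_mul h⟩
  · rw [← mul_finsum _ _, ht₂, mul_one]
  · have e : (fun u => m₁ u * m₂ v) = fun u => m₂ v * m₁ u := funext fun u => mul_comm _ _
    rw [e, ← mul_finsum _ _, ht₁, mul_one]

lemma exists_coupling_mass {x y : V} (hxy : G.Adj x y) {α : ℝ} (h0 : 0 ≤ α) (h1 : α ≤ 1) :
    ∃ A : V → V → ℝ, IsCoupling (mass G α x) (mass G α y) A :=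
  ⟨_, isCoupling_prod (mass_nonneg h0 h1 x) (mass_nonneg h0 h1 y)
    (mass_support_finite α x) (mass_support_finite α y)
    (finsum_mass α (deg_pos hxy)) (finsum_mass α (deg_pos hxy.symm))⟩

lemma mass_one (x v : V) : mass G 1 x v = if v = x then 1 else 0 := by
  unfold mass
  split_ifs <;> simp

def pointA (x y : V) : V → V → ℝ := fun u v => if u = x ∧ v = y then 1 else 0

lemma isCoupling_point {x y : V} (hxy : x ≠ y) :
    IsCoupling (mass G 1 x) (mass G 1 y) (pointA x y) := by
  refine ⟨fun u v => ?_, ?_, fun u => ?_, fun v => ?_⟩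
  · unfold pointA; split_ifs <;> norm_num
  · apply (Set.finite_singleton ((x, y) : V × V)).subset
    rintro ⟨u, v⟩ h
    simp only [Function.mem_support, pointA] at h
    by_cases hc : u = x ∧ v = y
    · simp [hc.1, hc.2]
    · simp [hc] at h
  · rw [mass_one]
    by_cases hu : u = x
    · rw [finsum_eq_single _ y (fun v hv => by simp [pointA, hv])]
      simp [pointA, hu]
    · rw [finsum_eq_zero_of_forall_eq_zero (fun v => by simp [pointA, hu])]
      simp [hu]
  · rw [mass_one]
    by_cases hv : v = y
    · rw [finsum_eq_single _ x (fun u hu => by simp [pointA, hu])]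
      simp [pointA, hv, hxy.symm]
    · rw [finsum_eq_zero_of_forall_eq_zero (fun u => by simp [pointA, hv])]
      simp [hv]

lemma cost_point (x y : V) : cost G (pointA x y) = (G.dist x y : ℝ) := by
  rw [cost, finsum_eq_single _ ((x, y) : V × V)]
  · simp [pointA]
  · rintro ⟨u, v⟩ hp
    have h : ¬(u = x ∧ v = y) := by
      rintro ⟨rfl, rfl⟩; exact hp rfl
    simp [pointA, h]

lemma isCoupling_combo {m₁ m₂ n₁ n₂ : V → ℝ} {A B : V → V → ℝ} {t : ℝ}
    (hA : IsCoupling m₁ m₂ A) (hB : IsCoupling n₁ n₂ B) (h0 : 0 ≤ t) (h1 : t ≤ 1) :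
    IsCoupling (fun v => t * m₁ v + (1 - t) * n₁ v) (fun v => t * m₂ v + (1 - t) * n₂ v)
      (fun u v => t * A u v + (1 - t) * B u v) := by
  obtain ⟨hA0, hAfin, hArow, hAcol⟩ := hA
  obtain ⟨hB0, hBfin, hBrow, hBcol⟩ := hB
  refine ⟨fun u v => add_nonneg (mul_nonneg h0 (hA0 u v))
      (mul_nonneg (by linarith) (hB0 u v)), ?_, fun u => ?_, fun v => ?_⟩
  · apply (hAfin.union hBfin).subset
    rintro p hp
    simp only [Function.mem_support] at hp
    by_contra hn
    simp only [Set.mem_union, Function.mem_support, not_or, not_not] at hn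
    exact hp (by rw [hn.1, hn.2]; ring)
  · have f1 : (Function.support fun v => t * A u v).Finite :=
      (row_support_finite hAfin u).subset fun v hv =>
        Function.mem_support.2 (right_ne_zero_of_mul (Function.mem_support.1 hv))
    have f2 : (Function.support fun v => (1 - t) * B u v).Finite :=
      (row_support_finite hBfin u).subset fun v hv =>
        Function.mem_support.2 (right_ne_zero_of_mul (Function.mem_support.1 hv))
    rw [finsum_add_distrib f1 f2, ← mul_finsum _ _,
      ← mul_finsum _ _, hArow u, hBrow u]
  · have f1 : (Function.support fun u => t * A u v).Finite :=
      (col_support_finite hAfin v).subset fun u hu =>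
        Function.mem_support.2 (right_ne_zero_of_mul (Function.mem_support.1 hu))
    have f2 : (Function.support fun u => (1 - t) * B u v).Finite :=
      (col_support_finite hBfin v).subset fun u hu =>
        Function.mem_support.2 (right_ne_zero_of_mul (Function.mem_support.1 hu))
    rw [finsum_add_distrib f1 f2, ← mul_finsum _ _,
      ← mul_finsum _ _, hAcol v, hBcol v]

lemma cost_combo {A B : V → V → ℝ} (t : ℝ)
    (hAfin : (Function.support fun p : V × V => A p.1 p.2).Finite)
    (hBfin : (Function.support fun p : V × V => B p.1 p.2).Finite) :
    cost G (fun u v => t * A u v + (1 - t) * B u v)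
      = t * cost G A + (1 - t) * cost G B := by
  have e : (fun p : V × V => (t * A p.1 p.2 + (1 - t) * B p.1 p.2) * (G.dist p.1 p.2 : ℝ))
      = fun p : V × V => t * (A p.1 p.2 * (G.dist p.1 p.2 : ℝ))
          + (1 - t) * (B p.1 p.2 * (G.dist p.1 p.2 : ℝ)) := funext fun p => by ring
  have fA : (Function.support fun p : V × V => A p.1 p.2 * (G.dist p.1 p.2 : ℝ)).Finite :=
    hAfin.subset fun p hp =>
      Function.mem_support.2 (left_ne_zero_of_mul (Function.mem_support.1 hp))
  have fB : (Function.support fun p : V × V => B p.1 p.2 * (G.dist p.1 p.2 : ℝ)).Finite :=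
    hBfin.subset fun p hp =>
      Function.mem_support.2 (left_ne_zero_of_mul (Function.mem_support.1 hp))
  have fA' : (Function.support fun p : V × V =>
      t * (A p.1 p.2 * (G.dist p.1 p.2 : ℝ))).Finite :=
    fA.subset fun p hp =>
      Function.mem_support.2 (right_ne_zero_of_mul (Function.mem_support.1 hp))
  have fB' : (Function.support fun p : V × V =>
      (1 - t) * (B p.1 p.2 * (G.dist p.1 p.2 : ℝ))).Finite :=
    fB.subset fun p hp =>
      Function.mem_support.2 (right_ne_zero_of_mul (Function.mem_support.1 hp))
  rw [cost, e, finsum_add_distrib fA' fB', cost, cost, ← mul_finsum _ _, ← mul_finsum _ _]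

lemma mass_convex {x : V} {α β : ℝ} (hα1 : α < 1) (hβ : β ≤ 1) (hαβ : α ≤ β) (v : V) :
    mass G β x v = ((1 - β) / (1 - α)) * mass G α x v
      + (1 - (1 - β) / (1 - α)) * mass G 1 x v := by
  have h1α : (1 : ℝ) - α ≠ 0 := by linarith
  unfold mass
  split_ifs
  · field_simp
    ring
  · field_simp
    ring
  · ring

lemma W_convex_bound {x y : V} (hxy : G.Adj x y) {α β : ℝ}
    (hα0 : 0 ≤ α) (hα1 : α < 1) (hβ1 : β < 1) (hαβ : α ≤ β) :
    W G (mass G β x) (mass G β y)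
      ≤ ((1 - β) / (1 - α)) * W G (mass G α x) (mass G α y)
        + (1 - (1 - β) / (1 - α)) := by
  set t : ℝ := (1 - β) / (1 - α) with ht
  have h1α : (0:ℝ) < 1 - α := by linarith
  have h1β : (0:ℝ) < 1 - β := by linarith
  have ht0 : 0 < t := div_pos h1β h1α
  have ht1 : t ≤ 1 := by
    rw [ht, div_le_one h1α]; linarith
  have key : ∀ c ∈ {c | ∃ A : V → V → ℝ,
      IsCoupling (mass G α x) (mass G α y) A ∧ c = cost G A},
      W G (mass G β x) (mass G β y) ≤ t * c + (1 - t) := by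
    rintro c ⟨A, hA, rfl⟩
    have hcombo := isCoupling_combo hA (isCoupling_point (G := G) hxy.ne) ht0.le ht1
    have e1 : (fun v => t * mass G α x v + (1 - t) * mass G 1 x v) = mass G β x :=
      funext fun v => (mass_convex hα1 hβ1.le hαβ v).symm
    have e2 : (fun v => t * mass G α y v + (1 - t) * mass G 1 y v) = mass G β y :=
      funext fun v => (mass_convex hα1 hβ1.le hαβ v).symm
    rw [e1, e2] at hcombo
    calc W G (mass G β x) (mass G β y)
        ≤ cost G (fun u v => t * A u v + (1 - t) * pointA x y u v) := W_le hcombo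
      _ = t * cost G A + (1 - t) * cost G (pointA x y) := by
          apply cost_combo t hA.2.1
          apply (Set.finite_singleton ((x, y) : V × V)).subset
          rintro ⟨u, v⟩ h
          simp only [Function.mem_support, pointA] at h
          by_cases hc : u = x ∧ v = y
          · simp [hc.1, hc.2]
          · simp [hc] at h
      _ = t * cost G A + (1 - t) := by
          rw [cost_point]
          have : G.dist x y = 1 := SimpleGraph.dist_eq_one_iff_adj.2 hxy
          rw [this]
          norm_num
  have hne : ∃ A : V → V → ℝ, IsCoupling (mass G α x) (mass G α y) A :=
    exists_coupling_mass hxy hα0 hα1.le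
  obtain ⟨A₀, hA₀⟩ := hne
  have hW : (W G (mass G β x) (mass G β y) - (1 - t)) / t
      ≤ W G (mass G α x) (mass G α y) := by
    conv_rhs => rw [W_eq]
    refine le_csInf ⟨cost G A₀, ⟨A₀, hA₀, rfl⟩⟩ ?_
    intro c hc
    rw [div_le_iff₀ ht0]
    have := key c hc
    linarith [mul_comm c t]
  rw [div_le_iff₀ ht0] at hW
  linarith [mul_comm (W G (mass G α x) (mass G α y)) t]
lemma q_monotoneOn {x y : V} (hxy : G.Adj x y) :
    MonotoneOn (fun α => kappaAlpha G α x y / (1 - α)) (Set.Ioo (0:ℝ) 1) := by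
  rintro α ⟨hα0, hα1⟩ β ⟨hβ0, hβ1⟩ hαβ
  have hW := W_convex_bound hxy hα0.le hα1 hβ1 hαβ
  set t : ℝ := (1 - β) / (1 - α) with ht
  have h1α : (0:ℝ) < 1 - α := by linarith
  have h1β : (0:ℝ) < 1 - β := by linarith
  set Wα := W G (mass G α x) (mass G α y)
  set Wβ := W G (mass G β x) (mass G β y)
  have hk : t * (1 - Wα) ≤ 1 - Wβ := by
    have : t * Wα + (1 - t) ≥ Wβ := hW
    nlinarith
  simp only [kappaAlpha]
  rw [div_le_div_iff₀ h1α h1β]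
  have e : t * (1 - Wα) * (1 - α) = (1 - Wα) * (1 - β) := by
    rw [ht, mul_comm ((1 - β) / (1 - α)), mul_assoc, div_mul_cancel₀ _ h1α.ne']
  nlinarith [mul_le_mul_of_nonneg_right hk h1α.le]

lemma q_le_of_lipschitz (hconn : G.Connected) {x y : V} (hxy : G.Adj x y)
    (f : V → ℝ) (hf : ∀ u v, f u - f v ≤ (G.dist u v : ℝ)) (hfx : f x = 1) (hfy : f y = 0)
    {α : ℝ} (hα : α ∈ Set.Ioo (0:ℝ) 1) :
    kappaAlpha G α x y / (1 - α) ≤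
      1 - ((1 / (deg G x : ℝ)) * ∑ u ∈ G.neighborFinset x, f u
            - (1 / (deg G y : ℝ)) * ∑ u ∈ G.neighborFinset y, f u) := by
  obtain ⟨hα0, hα1⟩ := hα
  have h1α : (0:ℝ) < 1 - α := by linarith
  have hW := le_W (exists_coupling_mass hxy hα0.le hα1.le) f hf
  rw [finsum_mass_mul, finsum_mass_mul, hfx, hfy] at hW
  set Sx := ∑ u ∈ G.neighborFinset x, f u
  set Sy := ∑ u ∈ G.neighborFinset y, f u
  set dx := (deg G x : ℝ)
  set dy := (deg G y : ℝ)
  set Wα := W G (mass G α x) (mass G α y)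
  rw [kappaAlpha, div_le_iff₀ h1α]
  have e : α * 1 + (1 - α) / dx * Sx - (α * 0 + (1 - α) / dy * Sy)
      = α + (1 - α) * (1 / dx * Sx - 1 / dy * Sy) := by ring
  rw [e] at hW
  nlinarith [hW]

lemma adj_dist_le_two {x u y : V} (h1 : G.Adj u x) (h2 : G.Adj x y) : G.dist u y ≤ 2 := by
  have := SimpleGraph.dist_le (SimpleGraph.Walk.cons h1 (SimpleGraph.Walk.cons h2 SimpleGraph.Walk.nil))
  simpa using this

lemma q_le_two (hconn : G.Connected) {x y : V} (hxy : G.Adj x y)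
    {α : ℝ} (hα : α ∈ Set.Ioo (0:ℝ) 1) :
    kappaAlpha G α x y / (1 - α) ≤ 2 := by
  have hf : ∀ u v : V, (G.dist u y : ℝ) - (G.dist v y : ℝ) ≤ (G.dist u v : ℝ) := by
    intro u v
    have h := hconn.dist_triangle (u := u) (v := v) (w := y)
    have : (G.dist u y : ℝ) ≤ (G.dist u v : ℝ) + (G.dist v y : ℝ) := by exact_mod_cast h
    linarith
  have hfx : ((G.dist x y : ℕ) : ℝ) = 1 := by
    rw [SimpleGraph.dist_eq_one_iff_adj.2 hxy]; norm_num
  have hfy : ((G.dist y y : ℕ) : ℝ) = 0 := by simp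
  have h := q_le_of_lipschitz hconn hxy (fun v => (G.dist v y : ℝ)) hf hfx hfy hα
  have hSy : ∑ u ∈ G.neighborFinset y, ((G.dist u y : ℕ) : ℝ) = (deg G y : ℝ) := by
    rw [deg_eq]
    have hone : ∀ u ∈ G.neighborFinset y, ((G.dist u y : ℕ) : ℝ) = 1 := by
      intro u hu
      rw [SimpleGraph.mem_neighborFinset] at hu
      rw [SimpleGraph.dist_eq_one_iff_adj.2 hu.symm]
      norm_num
    rw [Finset.sum_congr rfl hone, Finset.sum_const, nsmul_eq_mul, mul_one]
  have hSx : (0:ℝ) ≤ ∑ u ∈ G.neighborFinset x, ((G.dist u y : ℕ) : ℝ) :=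
    Finset.sum_nonneg fun u _ => Nat.cast_nonneg _
  have hdx : (0:ℝ) < (deg G x : ℝ) := by exact_mod_cast deg_pos hxy
  have hdy : (0:ℝ) < (deg G y : ℝ) := by exact_mod_cast deg_pos hxy.symm
  have h1 : (1 / (deg G y : ℝ)) * ∑ u ∈ G.neighborFinset y, ((G.dist u y : ℕ) : ℝ) = 1 := by
    rw [hSy]; field_simp
  have h2 : (0:ℝ) ≤ (1 / (deg G x : ℝ)) * ∑ u ∈ G.neighborFinset x, ((G.dist u y : ℕ) : ℝ) :=
    mul_nonneg (by positivity) hSx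
  calc kappaAlpha G α x y / (1 - α) ≤ _ := h
    _ ≤ 2 := by rw [h1] at *; linarith [h2, h1]

lemma q_image_bddAbove (hconn : G.Connected) {x y : V} (hxy : G.Adj x y) :
    BddAbove ((fun α => kappaAlpha G α x y / (1 - α)) '' Set.Ioo (0:ℝ) 1) := by
  refine ⟨2, ?_⟩
  rintro c ⟨α, hα, rfl⟩
  exact q_le_two hconn hxy hα

lemma q_sSup_eq_zero (hconn : G.Connected) (hflat : RicciFlat G) {x y : V} (hxy : G.Adj x y) :
    sSup ((fun α => kappaAlpha G α x y / (1 - α)) '' Set.Ioo (0:ℝ) 1) = 0 := by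
  have htend := MonotoneOn.tendsto_nhdsWithin_Ioo_left (x := (1:ℝ)) (y := (0:ℝ))
    ⟨1/2, by norm_num, by norm_num⟩ (q_monotoneOn hxy) (q_image_bddAbove hconn hxy)
  have hlim := htend.limUnder_eq
  have := hflat x y hxy
  rw [ricci] at this
  rw [← hlim, this]

lemma star (hconn : G.Connected) (hflat : RicciFlat G) {x y : V} (hxy : G.Adj x y)
    (f : V → ℝ) (hf : ∀ u v, f u - f v ≤ (G.dist u v : ℝ)) (hfx : f x = 1) (hfy : f y = 0) :
    (1 / (deg G x : ℝ)) * ∑ u ∈ G.neighborFinset x, f u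
      - (1 / (deg G y : ℝ)) * ∑ u ∈ G.neighborFinset y, f u ≤ 1 := by
  have hub : ∀ c ∈ (fun α => kappaAlpha G α x y / (1 - α)) '' Set.Ioo (0:ℝ) 1,
      c ≤ 1 - ((1 / (deg G x : ℝ)) * ∑ u ∈ G.neighborFinset x, f u
            - (1 / (deg G y : ℝ)) * ∑ u ∈ G.neighborFinset y, f u) := by
    rintro c ⟨α, hα, rfl⟩
    exact q_le_of_lipschitz hconn hxy f hf hfx hfy hα
  have hne : ((fun α => kappaAlpha G α x y / (1 - α)) '' Set.Ioo (0:ℝ) 1).Nonempty :=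
    ⟨_, ⟨1/2, ⟨by norm_num, by norm_num⟩, rfl⟩⟩
  have := csSup_le hne hub
  rw [q_sSup_eq_zero hconn hflat hxy] at this
  linarith

lemma q_le_zero (hconn : G.Connected) (hflat : RicciFlat G) {x y : V} (hxy : G.Adj x y)
    {α : ℝ} (hα : α ∈ Set.Ioo (0:ℝ) 1) :
    kappaAlpha G α x y / (1 - α) ≤ 0 := by
  have h := le_csSup (q_image_bddAbove hconn hxy)
    (Set.mem_image_of_mem (fun α => kappaAlpha G α x y / (1 - α)) hα)
  rwa [q_sSup_eq_zero hconn hflat hxy] at h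
lemma egirth_five (hg : G.girth = 5) : G.egirth = 5 := by
  rw [girth] at hg
  rw [ENat.toNat_eq_iff (by norm_num)] at hg
  exact_mod_cast hg

lemma cycle_ge_five (hg : G.girth = 5) {a : V} {w : G.Walk a a} (hw : w.IsCycle) :
    5 ≤ w.length := by
  have h5 : G.egirth = 5 := egirth_five hg
  have hle : G.egirth ≤ (w.length : ℕ∞) := by
    rw [SimpleGraph.egirth]
    exact le_trans (le_trans (iInf_le _ a) (iInf_le _ w)) (iInf_le _ hw)
  rw [h5] at hle
  exact_mod_cast hle

lemma no_triangle (hg : G.girth = 5) {a b c : V} (hab : G.Adj a b) (hbc : G.Adj b c)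
    (hca : G.Adj c a) : False := by
  have h1 : a ≠ b := hab.ne
  have h2 : b ≠ c := hbc.ne
  have h3 : c ≠ a := hca.ne
  have hcyc : (SimpleGraph.Walk.cons hab (SimpleGraph.Walk.cons hbc
      (SimpleGraph.Walk.cons hca SimpleGraph.Walk.nil))).IsCycle := by
    simp [SimpleGraph.Walk.isCycle_def, SimpleGraph.Walk.isTrail_def, Sym2.eq_iff,
      h1, h2, h3, h1.symm, h2.symm, h3.symm, Ne.symm h3, Ne.symm h1, Ne.symm h2]
  have := cycle_ge_five hg hcyc
  simp at this

lemma no_square (hg : G.girth = 5) {a b c d : V} (hab : G.Adj a b) (hbc : G.Adj b c)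
    (hcd : G.Adj c d) (hda : G.Adj d a) (hac : a ≠ c) (hbd : b ≠ d) : False := by
  have h1 : a ≠ b := hab.ne
  have h2 : b ≠ c := hbc.ne
  have h3 : c ≠ d := hcd.ne
  have h4 : d ≠ a := hda.ne
  have hcyc : (SimpleGraph.Walk.cons hab (SimpleGraph.Walk.cons hbc
      (SimpleGraph.Walk.cons hcd (SimpleGraph.Walk.cons hda SimpleGraph.Walk.nil)))).IsCycle := by
    simp [SimpleGraph.Walk.isCycle_def, SimpleGraph.Walk.isTrail_def, Sym2.eq_iff,
      h1, h2, h3, h4, hac, hbd, h1.symm, h2.symm, h3.symm, h4.symm, hac.symm, hbd.symm,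
      Ne.symm h1, Ne.symm h2, Ne.symm h3, Ne.symm h4]
  have := cycle_ge_five hg hcyc
  simp at this

lemma two_le_dist (hconn : G.Connected) {u v : V} (hne : u ≠ v) (hna : ¬ G.Adj u v) :
    2 ≤ G.dist u v := by
  have h0 : 0 < G.dist u v := hconn.pos_dist_of_ne hne
  have h1 : G.dist u v ≠ 1 := fun h => hna (SimpleGraph.dist_eq_one_iff_adj.mp h)
  omega

lemma exists_mid_of_dist_two (hconn : G.Connected) {u v : V} (h : G.dist u v = 2) :
    ∃ m, G.Adj u m ∧ G.Adj m v := by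
  obtain ⟨p, hp⟩ := hconn.exists_walk_length_eq_dist u v
  rw [h] at hp
  cases p with
  | nil => simp at hp
  | cons h1 q =>
    cases q with
    | nil => simp at hp
    | cons h2 r =>
      cases r with
      | nil => exact ⟨_, h1, h2⟩
      | cons h3 s => simp [SimpleGraph.Walk.length_cons] at hp

lemma three_le_dist (hconn : G.Connected) {u v : V} (hne : u ≠ v) (hna : ¬ G.Adj u v)
    (hmid : ∀ z, ¬(G.Adj u z ∧ G.Adj z v)) : 3 ≤ G.dist u v := by
  have h2 := two_le_dist hconn hne hna
  rcases eq_or_lt_of_le h2 with h | h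
  · exfalso
    obtain ⟨m, hm1, hm2⟩ := exists_mid_of_dist_two hconn h.symm
    exact hmid m ⟨hm1, hm2⟩
  · omega

def lipExt (G : SimpleGraph V) (f₀ : V → ℝ) (S : Finset V) (hS : S.Nonempty) (v : V) : ℝ :=
  S.sup' hS (fun s => f₀ s - (G.dist v s : ℝ))

lemma lipExt_lipschitz (hconn : G.Connected) (f₀ : V → ℝ) (S : Finset V) (hS : S.Nonempty) :
    ∀ u v, lipExt G f₀ S hS u - lipExt G f₀ S hS v ≤ (G.dist u v : ℝ) := by
  intro u v
  rw [sub_le_iff_le_add, lipExt]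
  apply Finset.sup'_le
  intro s hs
  have hle : lipExt G f₀ S hS v ≥ f₀ s - (G.dist v s : ℝ) :=
    Finset.le_sup' (fun s => f₀ s - (G.dist v s : ℝ)) hs
  have htri : G.dist v s ≤ G.dist v u + G.dist u s := hconn.dist_triangle
  have htri' : (G.dist v s : ℝ) ≤ (G.dist v u : ℝ) + (G.dist u s : ℝ) := by exact_mod_cast htri
  have hcomm : G.dist v u = G.dist u v := SimpleGraph.dist_comm
  rw [hcomm] at htri'
  linarith

lemma lipExt_eq (f₀ : V → ℝ) (S : Finset V) (hS : S.Nonempty)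
    (hpair : ∀ s ∈ S, ∀ t ∈ S, f₀ s - f₀ t ≤ (G.dist s t : ℝ))
    {s : V} (hs : s ∈ S) : lipExt G f₀ S hS s = f₀ s := by
  apply le_antisymm
  · apply Finset.sup'_le
    intro t ht
    have h := hpair t ht s hs
    have hcomm : G.dist s t = G.dist t s := SimpleGraph.dist_comm
    rw [hcomm]
    linarith
  · rw [lipExt]
    have h := Finset.le_sup' (fun t => f₀ t - (G.dist s t : ℝ)) hs
    simp only [SimpleGraph.dist_self, Nat.cast_zero, sub_zero] at h
    exact h
lemma mem_nbr {x u : V} : u ∈ G.neighborFinset x ↔ G.Adj x u := by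
  simp [SimpleGraph.mem_neighborFinset]

lemma leaf_false (hconn : G.Connected) (hflat : RicciFlat G) {x y : V} (hxy : G.Adj x y)
    (hdx : deg G x = 4) (hdy : deg G y = 1) : False := by
  classical
  have hxny : x ≠ y := hxy.ne
  have hyNx : y ∈ G.neighborFinset x := mem_nbr.2 hxy
  have hxnotN : x ∉ G.neighborFinset x := G.notMem_neighborFinset_self x
  have hcardN : (G.neighborFinset x).card = 4 := by rw [← deg_eq]; exact hdx
  have hnadj_y : ∀ w, G.Adj y w → w = x := by
    intro w hw
    have hwN : w ∈ G.neighborFinset y := mem_nbr.2 hw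
    have hxN : x ∈ G.neighborFinset y := mem_nbr.2 hxy.symm
    have hcard : (G.neighborFinset y).card = 1 := by rw [← deg_eq]; exact hdy
    obtain ⟨z, hz⟩ := Finset.card_eq_one.mp hcard
    rw [hz] at hwN hxN
    simp at hwN hxN
    rw [hwN, hxN]
  set N := G.neighborFinset x with hN
  set A : V → V → ℝ := fun u v =>
    if u = x ∧ v = x then 1/4 else if u = x ∧ v = y then 1/2
    else if u ∈ N ∧ v = y then 1/16 else 0 with hA
  have hsupp : Function.support (fun p : V × V => A p.1 p.2)
      ⊆ ((insert x N ×ˢ ({x, y} : Finset V) : Finset (V × V)) : Set (V × V)) := by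
    rintro ⟨u, v⟩ h
    simp only [Function.mem_support, hA] at h
    simp only [Finset.coe_product, Set.mem_prod, Finset.mem_coe, Finset.mem_insert,
      Finset.mem_singleton]
    split_ifs at h with h1 h2 h3
    · exact ⟨Or.inl h1.1, Or.inl h1.2⟩
    · exact ⟨Or.inl h2.1, Or.inr h2.2⟩
    · exact ⟨Or.inr h3.1, Or.inr h3.2⟩
    · exact absurd rfl h
  have hAfin : (Function.support (fun p : V × V => A p.1 p.2)).Finite :=
    Set.Finite.subset (Finset.finite_toSet _) hsupp
  have hcoup : IsCoupling (mass G (3/4) x) (mass G (3/4) y) A := by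
    refine ⟨fun u v => ?_, hAfin, fun u => ?_, fun v => ?_⟩
    · simp only [hA]; split_ifs <;> norm_num
    · by_cases hu : u = x
      · rw [hu]
        have hsub : Function.support (A x) ⊆ (({x, y} : Finset V) : Set V) := by
          intro v hv
          simp only [Function.mem_support, hA] at hv
          split_ifs at hv with h1 h2 h3
          · simp [h1.2]
          · simp [h2.2]
          · exact absurd h3.1 hxnotN
          · exact absurd rfl hv
        rw [finsum_eq_sum_of_support_subset _ hsub, Finset.sum_pair hxny]
        have e1 : A x x = 1/4 := by simp [hA]
        have e2 : A x y = 1/2 := by simp [hA, hxny, Ne.symm hxny]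
        have e3 : mass G (3/4) x x = 3/4 := by simp [mass]
        rw [e1, e2, e3]; norm_num
      · by_cases hu2 : u ∈ N
        · have hz : ∀ v, v ≠ y → A u v = 0 := by
            intro v hv
            simp [hA, hu, hv]
          rw [finsum_eq_single _ y hz]
          have e1 : A u y = 1/16 := by simp [hA, hu, hu2]
          have hadj : G.Adj x u := mem_nbr.1 hu2
          have e2 : mass G (3/4) x u = 1/16 := by
            simp [mass, hu, hadj, hdx]
            norm_num
          rw [e1, e2]
        · have hz : ∀ v, A u v = 0 := by
            intro v
            simp [hA, hu, hu2]
          rw [finsum_eq_zero_of_forall_eq_zero hz]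
          have hnadj : ¬ G.Adj x u := fun h => hu2 (mem_nbr.2 h)
          simp [mass, hu, hnadj]
    · by_cases hv : v = x
      · rw [hv]
        have hz : ∀ u, u ≠ x → A u x = 0 := by
          intro u hu
          simp [hA, hu, hxny]
        rw [finsum_eq_single _ x hz]
        have e1 : A x x = 1/4 := by simp [hA]
        have e2 : mass G (3/4) y x = 1/4 := by
          simp [mass, hxny, hxy.symm, hdy]
          norm_num
        rw [e1, e2]
      · by_cases hv2 : v = y
        · rw [hv2]
          have hsub : Function.support (fun u => A u y) ⊆ ((insert x N : Finset V) : Set V) := by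
            intro u hu
            simp only [Function.mem_support, hA] at hu
            split_ifs at hu with h1 h2 h3
            · simp [h1.1]
            · simp [h2.1]
            · simp [h3.1]
            · exact absurd rfl hu
          rw [finsum_eq_sum_of_support_subset _ hsub, Finset.sum_insert hxnotN]
          have e1 : A x y = 1/2 := by simp [hA, hxny, Ne.symm hxny]
          have e2 : ∀ u ∈ N, A u y = 1/16 := by
            intro u hu
            have hune : u ≠ x := fun h => hxnotN (h ▸ hu)
            simp [hA, hune, hu]
          rw [e1, Finset.sum_congr rfl e2, Finset.sum_const, hcardN]
          have e3 : mass G (3/4) y y = 3/4 := by simp [mass]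
          rw [e3]; norm_num
        · have hnadj : ¬ G.Adj y v := fun h => hv (hnadj_y v h)
          have hz : ∀ u, A u v = 0 := by
            intro u
            simp [hA, hv, hv2]
          rw [finsum_eq_zero_of_forall_eq_zero hz]
          simp [mass, hv2, hnadj]
  have hcost : cost G A ≤ 7/8 := by
    have hsub : Function.support (fun p : V × V => A p.1 p.2 * (G.dist p.1 p.2 : ℝ))
        ⊆ ((insert x N ×ˢ ({x, y} : Finset V) : Finset (V × V)) : Set (V × V)) :=
      fun p hp => hsupp (Function.mem_support.2
        (left_ne_zero_of_mul (Function.mem_support.1 hp)))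
    rw [cost, finsum_eq_sum_of_support_subset _ hsub,
      Finset.sum_product' (f := fun u v => A u v * (G.dist u v : ℝ)),
      Finset.sum_insert hxnotN]
    have ex : ∑ v ∈ ({x, y} : Finset V), A x v * (G.dist x v : ℝ) = 1/2 := by
      rw [Finset.sum_pair hxny]
      have e1 : A x x = 1/4 := by simp [hA]
      have e2 : A x y = 1/2 := by simp [hA, hxny, Ne.symm hxny]
      have d1 : G.dist x x = 0 := by simp
      have d2 : G.dist x y = 1 := SimpleGraph.dist_eq_one_iff_adj.2 hxy
      rw [e1, e2, d1, d2]
      norm_num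
    rw [ex]
    have hin : ∀ u ∈ N, ∑ v ∈ ({x, y} : Finset V), A u v * (G.dist u v : ℝ)
        = 1/16 * (G.dist u y : ℝ) := by
      intro u hu
      have hune : u ≠ x := fun h => hxnotN (h ▸ hu)
      rw [Finset.sum_pair hxny]
      have e1 : A u x = 0 := by simp [hA, hune, hxny]
      have e2 : A u y = 1/16 := by simp [hA, hune, hu]
      rw [e1, e2]
      ring
    rw [Finset.sum_congr rfl hin]
    have hsum : ∑ u ∈ N, 1/16 * (G.dist u y : ℝ) ≤ 3/8 := by
      rw [← Finset.sum_erase_add _ _ hyNx]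
      have hy0 : (1:ℝ)/16 * (G.dist y y : ℝ) = 0 := by simp
      rw [hy0, add_zero]
      have hbound : ∀ u ∈ N.erase y, 1/16 * (G.dist u y : ℝ) ≤ 1/8 := by
        intro u hu
        have huN : u ∈ N := Finset.mem_of_mem_erase hu
        have hadj : G.Adj x u := mem_nbr.1 huN
        have hd : G.dist u y ≤ 2 := adj_dist_le_two hadj.symm hxy
        have hd' : (G.dist u y : ℝ) ≤ 2 := by exact_mod_cast hd
        linarith
      calc ∑ u ∈ N.erase y, 1/16 * (G.dist u y : ℝ)
          ≤ ∑ _u ∈ N.erase y, (1/8 : ℝ) := Finset.sum_le_sum hbound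
        _ = 3/8 := by
            rw [Finset.sum_const, Finset.card_erase_of_mem hyNx, hcardN]
            norm_num
    linarith
  have hW : W G (mass G (3/4) x) (mass G (3/4) y) ≤ 7/8 := le_trans (W_le hcoup) hcost
  have hq : (1/2 : ℝ) ≤ kappaAlpha G (3/4) x y / (1 - 3/4) := by
    rw [kappaAlpha]
    have e : (1:ℝ) - 3/4 = 1/4 := by norm_num
    rw [e, le_div_iff₀ (by norm_num : (0:ℝ) < 1/4)]
    linarith
  have h0 := q_le_zero hconn hflat hxy (α := 3/4) ⟨by norm_num, by norm_num⟩
  linarith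
lemma deg_two_of_adj (hconn : G.Connected) (hflat : RicciFlat G) (hg : G.girth = 5)
    {x y : V} (hxy : G.Adj x y) (hdx : deg G x = 4) : deg G y = 2 := by
  classical
  have hxny : x ≠ y := hxy.ne
  have hyNx : y ∈ G.neighborFinset x := mem_nbr.2 hxy
  have hxNy : x ∈ G.neighborFinset y := mem_nbr.2 hxy.symm
  have hcardN : (G.neighborFinset x).card = 4 := by rw [← deg_eq]; exact hdx
  -- the test function
  set f₀ : V → ℝ := fun v =>
    if v = y then 0 else if v = x then 1 else if v ∈ G.neighborFinset x then 1 else -1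
    with hf₀
  set S : Finset V := insert x (G.neighborFinset x ∪ G.neighborFinset y) with hS
  have hxS : x ∈ S := Finset.mem_insert_self _ _
  have hyS : y ∈ S := Finset.mem_insert_of_mem (Finset.mem_union_left _ hyNx)
  have hSne : S.Nonempty := ⟨x, hxS⟩
  have hb : ∀ v, f₀ v = 0 ∨ f₀ v = 1 ∨ f₀ v = -1 := by
    intro v
    simp only [hf₀]
    split_ifs <;> simp
  have hone : ∀ v, f₀ v = 1 → v = x ∨ (G.Adj x v ∧ v ≠ y) := by
    intro v hv
    simp only [hf₀] at hv
    split_ifs at hv with h1 h2 h3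
    · norm_num at hv
    · exact Or.inl h2
    · exact Or.inr ⟨mem_nbr.1 h3, h1⟩
    · norm_num at hv
  have hminus : ∀ v, f₀ v = -1 → v ≠ y ∧ v ≠ x ∧ ¬ G.Adj x v := by
    intro v hv
    simp only [hf₀] at hv
    split_ifs at hv with h1 h2 h3
    · norm_num at hv
    · norm_num at hv
    · norm_num at hv
    · exact ⟨h1, h2, fun h => h3 (mem_nbr.2 h)⟩
  have hpair : ∀ s ∈ S, ∀ t ∈ S, f₀ s - f₀ t ≤ (G.dist s t : ℝ) := by
    intro s hs t ht
    by_cases hst : s = t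
    · rw [hst]
      simp
    by_cases hadj : G.Adj s t
    · have hd : G.dist s t = 1 := SimpleGraph.dist_eq_one_iff_adj.2 hadj
      rw [hd]
      -- need f₀ s - f₀ t ≤ 1; only bad case is f₀ s = 1, f₀ t = -1
      rcases hb s with hv1 | hv1 | hv1 <;> rcases hb t with hv2 | hv2 | hv2 <;>
        rw [hv1, hv2] <;> try norm_num
      -- remaining : f₀ s = 1 and f₀ t = -1
      exfalso
      obtain ⟨hty, htx, htax⟩ := hminus t hv2
      have htNy : G.Adj y t := by
        have : t ∈ S := ht
        rw [hS] at this
        rcases Finset.mem_insert.1 this with h | h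
        · exact absurd h htx
        rcases Finset.mem_union.1 h with h | h
        · exact absurd (mem_nbr.1 h) htax
        · exact mem_nbr.1 h
      rcases hone s hv1 with rfl | ⟨hsadj, hsy⟩
      · exact htax hadj
      · -- square x s t y
        exact no_square hg hsadj hadj htNy.symm hxy.symm (Ne.symm htx) hsy
    · have h2 : 2 ≤ G.dist s t := two_le_dist hconn hst hadj
      have h2' : (2:ℝ) ≤ (G.dist s t : ℝ) := by exact_mod_cast h2
      rcases hb s with hv1 | hv1 | hv1 <;> rcases hb t with hv2 | hv2 | hv2 <;>
        rw [hv1, hv2] <;> linarith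
  set f : V → ℝ := lipExt G f₀ S hSne with hf
  have hfval : ∀ s ∈ S, f s = f₀ s := fun s hs => lipExt_eq f₀ S hSne hpair hs
  have hfx : f x = 1 := by
    rw [hfval x hxS]
    simp only [hf₀]
    simp [hxny, Ne.symm hxny]
  have hfy : f y = 0 := by
    rw [hfval y hyS]
    simp [hf₀]
  have hstar := star hconn hflat hxy f (lipExt_lipschitz hconn f₀ S hSne) hfx hfy
  -- compute the sums
  have hSx : ∑ u ∈ G.neighborFinset x, f u = 3 := by
    have he : ∀ u ∈ G.neighborFinset x, f u = f₀ u := by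
      intro u hu
      exact hfval u (Finset.mem_insert_of_mem (Finset.mem_union_left _ hu))
    rw [Finset.sum_congr rfl he, ← Finset.sum_erase_add _ _ hyNx]
    have hy0 : f₀ y = 0 := by simp [hf₀]
    have hu1 : ∀ u ∈ (G.neighborFinset x).erase y, f₀ u = 1 := by
      intro u hu
      have huy : u ≠ y := Finset.ne_of_mem_erase hu
      have huN : u ∈ G.neighborFinset x := Finset.mem_of_mem_erase hu
      have hux : u ≠ x := fun h => (G.notMem_neighborFinset_self x) (h ▸ huN)
      simp [hf₀, huy, hux, mem_nbr.1 huN]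
    rw [Finset.sum_congr rfl hu1, Finset.sum_const,
      Finset.card_erase_of_mem hyNx, hcardN]
    simp [hf₀]
  have hSy : ∑ u ∈ G.neighborFinset y, f u = 2 - (deg G y : ℝ) := by
    have he : ∀ u ∈ G.neighborFinset y, f u = f₀ u := by
      intro u hu
      exact hfval u (Finset.mem_insert_of_mem (Finset.mem_union_right _ hu))
    rw [Finset.sum_congr rfl he, ← Finset.sum_erase_add _ _ hxNy]
    have hx1 : f₀ x = 1 := by
      simp only [hf₀]
      simp [hxny, Ne.symm hxny]
    have huminus : ∀ u ∈ (G.neighborFinset y).erase x, f₀ u = -1 := by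
      intro u hu
      have hux : u ≠ x := Finset.ne_of_mem_erase hu
      have huN : u ∈ G.neighborFinset y := Finset.mem_of_mem_erase hu
      have hadjyu : G.Adj y u := mem_nbr.1 huN
      have huy : u ≠ y := fun h => (G.irrefl) (h ▸ hadjyu)
      have hnadj : u ∉ G.neighborFinset x := by
        intro hmem
        exact no_triangle hg (mem_nbr.1 hmem) hadjyu.symm hxy.symm
      have hnadj' : ¬ G.Adj x u := fun h => hnadj (mem_nbr.2 h)
      simp [hf₀, huy, hux, hnadj']
    rw [Finset.sum_congr rfl huminus, Finset.sum_const,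
      Finset.card_erase_of_mem hxNy, ← deg_eq]
    have hdy1 : 1 ≤ deg G y := deg_pos hxy.symm
    simp only [nsmul_eq_mul, hf₀]
    norm_num [hxny]
    push_cast [Nat.cast_sub hdy1]
    ring
  rw [hSx, hSy, hdx] at hstar
  have hdy0 : (0:ℝ) < (deg G y : ℝ) := by exact_mod_cast deg_pos hxy.symm
  have hdyle : (deg G y : ℝ) ≤ 8/3 := by
    have h4 : ((4:ℕ):ℝ) = 4 := by norm_num
    rw [h4] at hstar
    have hmul := mul_le_mul_of_nonneg_right hstar hdy0.le
    have e : 1/(deg G y : ℝ) * (2 - (deg G y : ℝ)) * (deg G y : ℝ) = 2 - (deg G y : ℝ) := by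
      field_simp
    ring_nf at hmul e ⊢
    nlinarith [hmul, e]
  have hdyle2 : deg G y ≤ 2 := by
    by_contra hc
    push_neg at hc
    have : (3:ℝ) ≤ (deg G y : ℝ) := by exact_mod_cast hc
    linarith
  have hdyne1 : deg G y ≠ 1 := fun h => leaf_false hconn hflat hxy hdx h
  have hdyne0 : deg G y ≠ 0 := Nat.pos_iff_ne_zero.mp (deg_pos hxy.symm)
  omega
lemma other_nbr (hconn : G.Connected) (hflat : RicciFlat G) (hg : G.girth = 5)
    {x y : V} (hxy : G.Adj x y) (hdx : deg G x = 4) :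
    ∃ z, G.neighborFinset y = {x, z} ∧ z ≠ x := by
  have hd2 := deg_two_of_adj hconn hflat hg hxy hdx
  have hxNy : x ∈ G.neighborFinset y := mem_nbr.2 hxy.symm
  have hcard : (G.neighborFinset y).card = 2 := by rw [← deg_eq]; exact hd2
  have hcard1 : ((G.neighborFinset y).erase x).card = 1 := by
    rw [Finset.card_erase_of_mem hxNy, hcard]
  obtain ⟨z, hz⟩ := Finset.card_eq_one.mp hcard1
  refine ⟨z, ?_, ?_⟩
  · rw [← Finset.insert_erase hxNy, hz]
  · have hzmem : z ∈ (G.neighborFinset y).erase x := by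
      rw [hz]; exact Finset.mem_singleton_self z
    exact Finset.ne_of_mem_erase hzmem

lemma z_adj_of_close (hconn : G.Connected) (hg : G.girth = 5) {x q p zp zq : V}
    (hq : G.Adj x q) (hp : G.Adj x p) (hqp : q ≠ p)
    (hNq : G.neighborFinset q = {x, zq})
    (hzp_adj : G.Adj p zp) (hzp_nx : ¬ G.Adj x zp) (hzpx : zp ≠ x)
    (hd : G.dist q zp ≤ 2) : G.Adj zq zp := by
  have hqzp : q ≠ zp := fun h => hzp_nx (h ▸ hq)
  have hnadj : ¬ G.Adj q zp := fun h =>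
    no_square hg hq h hzp_adj.symm hp.symm (Ne.symm hzpx) hqp
  have h2 : G.dist q zp = 2 := le_antisymm hd (two_le_dist hconn hqzp hnadj)
  obtain ⟨m, hm1, hm2⟩ := exists_mid_of_dist_two hconn h2
  have hmN : m ∈ G.neighborFinset q := mem_nbr.2 hm1
  rw [hNq] at hmN
  rcases Finset.mem_insert.1 hmN with rfl | hm
  · exact absurd hm2 hzp_nx
  · rw [Finset.mem_singleton] at hm
    exact hm ▸ hm2

lemma partner (hconn : G.Connected) (hflat : RicciFlat G) (hg : G.girth = 5)
    {x p q r zp : V} (hdx : deg G x = 4)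
    (hp : G.Adj x p) (hq : G.Adj x q) (hr : G.Adj x r)
    (hpq : p ≠ q) (hpr : p ≠ r) (hqr : q ≠ r)
    (hNp : G.neighborFinset p = {x, zp}) (hzpx : zp ≠ x) :
    G.dist q zp ≤ 2 ∨ G.dist r zp ≤ 2 := by
  classical
  by_contra hcon
  push_neg at hcon
  obtain ⟨hq3, hr3⟩ := hcon
  have hq3' : (3:ℝ) ≤ (G.dist q zp : ℝ) := by exact_mod_cast hq3
  have hr3' : (3:ℝ) ≤ (G.dist r zp : ℝ) := by exact_mod_cast hr3
  set N := G.neighborFinset x with hN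
  have hpN : p ∈ N := mem_nbr.2 hp
  have hqN : q ∈ N := mem_nbr.2 hq
  have hrN : r ∈ N := mem_nbr.2 hr
  have hcardN : N.card = 4 := by rw [hN, ← deg_eq]; exact hdx
  have hzp_adj : G.Adj p zp := by
    have : zp ∈ G.neighborFinset p := by rw [hNp]; simp
    exact mem_nbr.1 this
  have hzp_nx : ¬ G.Adj x zp := fun h => no_triangle hg hp hzp_adj h.symm
  have hzpN : zp ∉ N := fun h => hzp_nx (mem_nbr.1 h)
  have hdegp : deg G p = 2 := by
    rw [deg_eq, hNp, Finset.card_insert_of_notMem (by simpa using Ne.symm hzpx),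
      Finset.card_singleton]
  have hzpp : zp ≠ p := fun h => G.irrefl (h ▸ hzp_adj)
  have hzpq : zp ≠ q := fun h => hzpN (h ▸ hqN)
  have hzpr : zp ≠ r := fun h => hzpN (h ▸ hrN)
  have hxp : x ≠ p := hp.ne
  have hxq : x ≠ q := hq.ne
  have hxr : x ≠ r := hr.ne
  -- test function
  set f₀ : V → ℝ := fun v =>
    if v = p then 0 else if v = zp then -1 else if v = q ∨ v = r then 2 else 1 with hf₀
  set S : Finset V := insert zp (insert x N) with hS
  have hxS : x ∈ S := by simp [hS]
  have hzpS : zp ∈ S := by simp [hS]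
  have hpS : p ∈ S := by simp [hS, hpN]
  have hSne : S.Nonempty := ⟨x, hxS⟩
  have hval_p : f₀ p = 0 := by simp [hf₀]
  have hval_zp : f₀ zp = -1 := by simp [hf₀, hzpp]
  have hval_q : f₀ q = 2 := by simp [hf₀, Ne.symm hpq, Ne.symm hzpq]
  have hval_r : f₀ r = 2 := by simp [hf₀, Ne.symm hpr, Ne.symm hzpr]
  have hval_x : f₀ x = 1 := by simp [hf₀, hxp, Ne.symm hzpx, hxq, hxr]
  have hchar : ∀ v ∈ S, (v = p) ∨ (v = zp) ∨ (v = q ∨ v = r) ∨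
      (f₀ v = 1 ∧ v ≠ zp ∧ (v = x ∨ v ∈ N) ∧ v ≠ p) := by
    intro v hv
    by_cases h1 : v = p
    · exact Or.inl h1
    by_cases h2 : v = zp
    · exact Or.inr (Or.inl h2)
    by_cases h3 : v = q ∨ v = r
    · exact Or.inr (Or.inr (Or.inl h3))
    refine Or.inr (Or.inr (Or.inr ⟨by simp [hf₀, h1, h2, h3], h2, ?_, h1⟩))
    rw [hS] at hv
    rcases Finset.mem_insert.1 hv with h | h
    · exact absurd h h2
    rcases Finset.mem_insert.1 h with h | h
    · exact Or.inl h
    · exact Or.inr h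
  -- pairwise Lipschitz bounds on S
  have hd0 : ∀ u w : V, (0:ℝ) ≤ (G.dist u w : ℝ) := fun u w => Nat.cast_nonneg _
  have hd1 : ∀ {u w : V}, u ≠ w → (1:ℝ) ≤ (G.dist u w : ℝ) := by
    intro u w h
    have := hconn.pos_dist_of_ne h
    exact_mod_cast this
  have hd2' : ∀ {u w : V}, u ≠ w → ¬ G.Adj u w → (2:ℝ) ≤ (G.dist u w : ℝ) := by
    intro u w h hna
    have := two_le_dist hconn h hna
    exact_mod_cast this
  -- no adjacency between distinct neighbors of x
  have hno_adj_nbrs : ∀ {u w : V}, u ∈ N → w ∈ N → ¬ G.Adj u w := by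
    intro u w hu hw hadj
    exact no_triangle hg (mem_nbr.1 hu) hadj (mem_nbr.1 hw).symm
  -- value-1 vertices are not adjacent to zp
  have hone_nzp : ∀ {v : V}, (v = x ∨ v ∈ N) → v ≠ p → ¬ G.Adj v zp := by
    rintro v (rfl | hvN) hvp
    · exact hzp_nx
    · intro hadj
      exact no_square hg (mem_nbr.1 hvN) hadj hzp_adj.symm hp.symm (Ne.symm hzpx) hvp
  have hqr_case : ∀ {s : V}, (s = q ∨ s = r) → f₀ s - f₀ p ≤ (G.dist s p : ℝ) := by
    intro s hs
    have hsval : f₀ s = 2 := by rcases hs with rfl | rfl; exacts [hval_q, hval_r]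
    have hsadj : G.Adj x s := by rcases hs with rfl | rfl; exacts [hq, hr]
    have hsp : s ≠ p := by rcases hs with rfl | rfl; exacts [Ne.symm hpq, Ne.symm hpr]
    have hnadj : ¬ G.Adj s p := hno_adj_nbrs (mem_nbr.2 hsadj) hpN
    have := hd2' hsp hnadj
    rw [hsval, hval_p]
    linarith
  have hpair : ∀ s ∈ S, ∀ t ∈ S, f₀ s - f₀ t ≤ (G.dist s t : ℝ) := by
    intro s hs t ht
    by_cases hst : s = t
    · rw [hst]; simp
    have hsqrval : (s = q ∨ s = r) → f₀ s = 2 := by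
      rintro (h | h) <;> rw [h] <;> [exact hval_q; exact hval_r]
    have htqrval : (t = q ∨ t = r) → f₀ t = 2 := by
      rintro (h | h) <;> rw [h] <;> [exact hval_q; exact hval_r]
    rcases hchar s hs with hsp' | hszp' | hsqr | ⟨hs1, hszp, hsmem, hsp⟩ <;>
      rcases hchar t ht with htp' | htzp' | htqr | ⟨ht1, htzp, htmem, htp⟩
    · exact absurd (hsp'.trans htp'.symm) hst
    · have hfs : f₀ s = 0 := by rw [hsp']; exact hval_p
      have hft : f₀ t = -1 := by rw [htzp']; exact hval_zp
      rw [hfs, hft]; linarith [hd1 hst]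
    · have hfs : f₀ s = 0 := by rw [hsp']; exact hval_p
      rw [hfs, htqrval htqr]; linarith [hd0 s t]
    · have hfs : f₀ s = 0 := by rw [hsp']; exact hval_p
      rw [hfs, ht1]; linarith [hd0 s t]
    · have hfs : f₀ s = -1 := by rw [hszp']; exact hval_zp
      have hft : f₀ t = 0 := by rw [htp']; exact hval_p
      rw [hfs, hft]; linarith [hd0 s t]
    · exact absurd (hszp'.trans htzp'.symm) hst
    · have hfs : f₀ s = -1 := by rw [hszp']; exact hval_zp
      rw [hfs, htqrval htqr]; linarith [hd0 s t]
    · have hfs : f₀ s = -1 := by rw [hszp']; exact hval_zp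
      rw [hfs, ht1]; linarith [hd0 s t]
    · rw [htp']; exact hqr_case hsqr
    · have hft : f₀ t = -1 := by rw [htzp']; exact hval_zp
      have h3 : (3:ℝ) ≤ (G.dist s t : ℝ) := by
        rw [htzp']
        rcases hsqr with h | h <;> rw [h] <;> [exact hq3'; exact hr3']
      rw [hsqrval hsqr, hft]; linarith
    · rw [hsqrval hsqr, htqrval htqr]; linarith [hd0 s t]
    · rw [hsqrval hsqr, ht1]; linarith [hd1 hst]
    · have hft : f₀ t = 0 := by rw [htp']; exact hval_p
      rw [hs1, hft]; linarith [hd1 hst]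
    · have hnadj : ¬ G.Adj s zp := hone_nzp hsmem hsp
      have h2 : (2:ℝ) ≤ (G.dist s t : ℝ) := by
        rw [htzp']; exact hd2' (fun h => hst (h ▸ htzp'.symm ▸ rfl)) hnadj
      have hft : f₀ t = -1 := by rw [htzp']; exact hval_zp
      rw [hs1, hft]; linarith
    · rw [hs1, htqrval htqr]; linarith [hd0 s t]
    · rw [hs1, ht1]; linarith [hd0 s t]
  set f : V → ℝ := lipExt G f₀ S hSne with hf
  have hfval : ∀ s ∈ S, f s = f₀ s := fun s hs => lipExt_eq f₀ S hSne hpair hs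
  have hfx : f x = 1 := by rw [hfval x hxS]; exact hval_x
  have hfp : f p = 0 := by rw [hfval p hpS]; exact hval_p
  have hstar := star hconn hflat hp f (lipExt_lipschitz hconn f₀ S hSne) hfx hfp
  -- compute sums
  have hqN' : q ∈ N.erase p := Finset.mem_erase.2 ⟨Ne.symm hpq, hqN⟩
  have hrN' : r ∈ (N.erase p).erase q :=
    Finset.mem_erase.2 ⟨Ne.symm hqr, Finset.mem_erase.2 ⟨Ne.symm hpr, hrN⟩⟩
  have hTcard : (((N.erase p).erase q).erase r).card = 1 := by
    rw [Finset.card_erase_of_mem hrN', Finset.card_erase_of_mem hqN',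
      Finset.card_erase_of_mem hpN, hcardN]
  obtain ⟨u4, hu4⟩ := Finset.card_eq_one.mp hTcard
  have hu4T : u4 ∈ ((N.erase p).erase q).erase r := by rw [hu4]; simp
  have hu4r : u4 ≠ r := Finset.ne_of_mem_erase hu4T
  have hu4q : u4 ≠ q := Finset.ne_of_mem_erase (Finset.mem_of_mem_erase hu4T)
  have hu4p : u4 ≠ p := Finset.ne_of_mem_erase
    (Finset.mem_of_mem_erase (Finset.mem_of_mem_erase hu4T))
  have hu4N : u4 ∈ N := Finset.mem_of_mem_erase
    (Finset.mem_of_mem_erase (Finset.mem_of_mem_erase hu4T))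
  have hu4zp : u4 ≠ zp := fun h => hzpN (h ▸ hu4N)
  have hval_u4 : f₀ u4 = 1 := by simp [hf₀, hu4p, hu4q, hu4r, hu4zp]
  have hNsum : ∑ u ∈ N, f u = 5 := by
    have he : ∀ u ∈ N, f u = f₀ u := by
      intro u hu
      exact hfval u (by simp [hS, hu])
    rw [Finset.sum_congr rfl he]
    rw [← Finset.insert_erase hpN, Finset.sum_insert (Finset.notMem_erase _ _)]
    rw [← Finset.insert_erase hqN', Finset.sum_insert (Finset.notMem_erase _ _)]
    rw [← Finset.insert_erase hrN', Finset.sum_insert (Finset.notMem_erase _ _)]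
    rw [hu4, Finset.sum_singleton]
    norm_num [Ne.symm hpq, Ne.symm hpr, Ne.symm hzpq, Ne.symm hzpr, hu4p, hu4q, hu4r, hu4zp]
  have hPsum : ∑ u ∈ G.neighborFinset p, f u = 0 := by
    rw [hNp, Finset.sum_pair (Ne.symm hzpx)]
    have h1 : f x = 1 := hfx
    have h2 : f zp = f₀ zp := hfval zp hzpS
    rw [h1, h2, hval_zp]
    norm_num
  rw [hNsum, hPsum, hdx, hdegp] at hstar
  norm_num at hstar

end Lemmas

section Main

open Function Set SimpleGraph

/-- **Claim a.** A connected, locally finite simple Ricci-flat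
graph with girth 5 has no vertex of degree 4. -/
theorem no_degree_four_of_ricciFlat_girth_five
    {V : Type*} (G : SimpleGraph V) [G.LocallyFinite]
    (hconn : G.Connected) (hflat : RicciFlat G) (hgirth : G.girth = 5) :
    ∀ v : V, deg G v ≠ 4 := by
  intro x hdx
  classical
  have hcardN : (G.neighborFinset x).card = 4 := by rw [← deg_eq]; exact hdx
  obtain ⟨a, t3, hat, hins, ht3⟩ := Finset.card_eq_succ.mp (show (G.neighborFinset x).card = 3 + 1 by rw [hcardN])
  obtain ⟨b, c, d, hbc, hbd, hcd, ht3e⟩ := Finset.card_eq_three.mp ht3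
  have haN : a ∈ G.neighborFinset x := hins ▸ Finset.mem_insert_self a t3
  have hbN : b ∈ G.neighborFinset x := hins ▸ Finset.mem_insert_of_mem (by rw [ht3e]; simp)
  have hcN : c ∈ G.neighborFinset x := hins ▸ Finset.mem_insert_of_mem (by rw [ht3e]; simp)
  have hdN : d ∈ G.neighborFinset x := hins ▸ Finset.mem_insert_of_mem (by rw [ht3e]; simp)
  have ha : G.Adj x a := mem_nbr.1 haN
  have hb : G.Adj x b := mem_nbr.1 hbN
  have hc : G.Adj x c := mem_nbr.1 hcN
  have hd : G.Adj x d := mem_nbr.1 hdN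
  have hab : a ≠ b := fun h => hat (by rw [h, ht3e]; simp)
  have hac : a ≠ c := fun h => hat (by rw [h, ht3e]; simp)
  have had : a ≠ d := fun h => hat (by rw [h, ht3e]; simp)
  obtain ⟨za, hNa, hzax⟩ := other_nbr hconn hflat hgirth ha hdx
  obtain ⟨zb, hNb, hzbx⟩ := other_nbr hconn hflat hgirth hb hdx
  obtain ⟨zc, hNc, hzcx⟩ := other_nbr hconn hflat hgirth hc hdx
  obtain ⟨zd, hNd, hzdx⟩ := other_nbr hconn hflat hgirth hd hdx
  -- distinctness of the z's
  have zdist : ∀ {p q zp zq : V}, G.Adj x p → G.Adj x q → p ≠ q → zp ≠ x →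
      G.neighborFinset p = {x, zp} → G.neighborFinset q = {x, zq} → zp ≠ zq := by
    intro p q zp zq hp hq hpq hzpx hNp hNq h
    have hzp_adj : G.Adj p zp := mem_nbr.1 (by rw [hNp]; simp)
    have hzq_adj : G.Adj q zq := mem_nbr.1 (by rw [hNq]; simp)
    exact no_square hgirth hp hzp_adj (by rw [h]; exact hzq_adj.symm) hq.symm
      (Ne.symm hzpx) hpq
  have dab : za ≠ zb := zdist ha hb hab hzax hNa hNb
  have dac : za ≠ zc := zdist ha hc hac hzax hNa hNc
  have dad : za ≠ zd := zdist ha hd had hzax hNa hNd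
  have dbc : zb ≠ zc := zdist hb hc hbc hzbx hNb hNc
  have dbd : zb ≠ zd := zdist hb hd hbd hzbx hNb hNd
  have dcd : zc ≠ zd := zdist hc hd hcd hzcx hNc hNd
  -- the key dichotomy from curvature flatness
  have key : ∀ {p q r zp zq zr : V}, G.Adj x p → G.Adj x q → G.Adj x r →
      p ≠ q → p ≠ r → q ≠ r →
      G.neighborFinset p = {x, zp} → zp ≠ x →
      G.neighborFinset q = {x, zq} →
      G.neighborFinset r = {x, zr} →
      G.Adj zq zp ∨ G.Adj zr zp := by
    intro p q r zp zq zr hp hq hr hpq hpr hqr hNp hzpx hNq hNr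
    have hzp_adj : G.Adj p zp := mem_nbr.1 (by rw [hNp]; simp)
    have hzp_nx : ¬ G.Adj x zp := fun h => no_triangle hgirth hp hzp_adj h.symm
    rcases partner hconn hflat hgirth hdx hp hq hr hpq hpr hqr hNp hzpx with h | h
    · exact Or.inl (z_adj_of_close hconn hgirth hq hp (Ne.symm hpq) hNq hzp_adj hzp_nx hzpx h)
    · exact Or.inr (z_adj_of_close hconn hgirth hr hp (Ne.symm hpr) hNr hzp_adj hzp_nx hzpx h)
  -- case analysis on the neighbours of za among the other z's
  by_cases h1 : G.Adj za zb <;> by_cases h2 : G.Adj za zc <;> by_cases h3 : G.Adj za zd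
  · have hbc_n : ¬ G.Adj zb zc := fun h => no_triangle hgirth h1 h h2.symm
    have hdb : G.Adj zd zb := by
      rcases key hb hc hd hbc hbd hcd hNb hzbx hNc hNd with h | h
      · exact absurd h.symm hbc_n
      · exact h
    have hdc : G.Adj zd zc := by
      rcases key hc hb hd (Ne.symm hbc) hcd hbd hNc hzcx hNb hNd with h | h
      · exact absurd h hbc_n
      · exact h
    exact no_square hgirth h1 hdb.symm hdc h2.symm dad dbc
  · have hbc_n : ¬ G.Adj zb zc := fun h => no_triangle hgirth h1 h h2.symm
    have hdb : G.Adj zd zb := by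
      rcases key hb hc hd hbc hbd hcd hNb hzbx hNc hNd with h | h
      · exact absurd h.symm hbc_n
      · exact h
    have hdc : G.Adj zd zc := by
      rcases key hc hb hd (Ne.symm hbc) hcd hbd hNc hzcx hNb hNd with h | h
      · exact absurd h hbc_n
      · exact h
    exact no_square hgirth h1 hdb.symm hdc h2.symm dad dbc
  · have hbd_n : ¬ G.Adj zb zd := fun h => no_triangle hgirth h1 h h3.symm
    have hcb : G.Adj zc zb := by
      rcases key hb hc hd hbc hbd hcd hNb hzbx hNc hNd with h | h
      · exact h
      · exact absurd h (fun hh => hbd_n hh.symm)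
    have hcd' : G.Adj zc zd := by
      rcases key hd hc hb (Ne.symm hcd) (Ne.symm hbd) (Ne.symm hbc) hNd hzdx hNc hNb with h | h
      · exact h
      · exact absurd h (fun hh => hbd_n hh)
    exact no_square hgirth h1 hcb.symm hcd' h3.symm dac dbd
  · rcases key ha hc hd hac had hcd hNa hzax hNc hNd with h | h
    · exact h2 h.symm
    · exact h3 h.symm
  · have hcd_n : ¬ G.Adj zc zd := fun h => no_triangle hgirth h2 h h3.symm
    have hbc' : G.Adj zb zc := by
      rcases key hc hb hd (Ne.symm hbc) hcd hbd hNc hzcx hNb hNd with h | h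
      · exact h
      · exact absurd h (fun hh => hcd_n hh.symm)
    have hbd' : G.Adj zb zd := by
      rcases key hd hb hc (Ne.symm hbd) (Ne.symm hcd) hbc hNd hzdx hNb hNc with h | h
      · exact h
      · exact absurd h (fun hh => hcd_n hh)
    exact no_square hgirth h2 hbc'.symm hbd' h3.symm dab dcd
  · rcases key ha hb hd hab had hbd hNa hzax hNb hNd with h | h
    · exact h1 h.symm
    · exact h3 h.symm
  · rcases key ha hb hc hab hac hbc hNa hzax hNb hNc with h | h
    · exact h1 h.symm
    · exact h2 h.symm
  · rcases key ha hb hc hab hac hbc hNa hzax hNb hNc with h | h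
    · exact h1 h.symm
    · exact h2 h.symm

end Main


end RicciFlatPaper

end
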